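/- For every integer N ≥ 1, every integer n ≥ 0, and every real x ≠ 0, 2^{N+1} · N! · Σ_{(s,m,p): s+m+p=n} C(N+s, s) · C(m+N, m) · (-1)^m · T_p^{(N+1)}(x) = Σ_{i=1}^{N} Σ_{l=0}^{i} a(i,N) · (i!/l!) · Σ_{(m,s,p): m+s+p=n} C(2N+m-i-1, m) · C(i+s-l, s) · (p+l)_l · x^{i-2N-m} · T_{p+l}(x) + Σ_{i=1}^{N} Σ_{l=0}^{i} a(i,N) · (i!/l!) · (-1)^{i-l} · Σ_{(m,s,p): m+s+p=n} (-1)^s · C(2N+m-i-1, m) · C(i+s-l, s) · (p+l)_l · x^{i-2N-m} · T_{p+l}(x), where the sums over (m,s,p) (resp. (s,m,p)) run over all triples of nonnegative integers summing to n and x^{i-2N-m} is an integer (possibly negative) power of x. -/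

import Mathlib

/-- The falling factorial `(y)_k = y(y-1)⋯(y-k+1)` of a real number, `(y)_0 = 1`. -/
noncomputable def fallingFactorial (y : ℝ) (k : ℕ) : ℝ :=
  ∏ j ∈ Finset.range k, (y - (j : ℝ))

/-- `D = 1 - 2x·t + t²` as a formal power series in `t` over `ℝ`. -/
noncomputable def Dser (x : ℝ) : PowerSeries ℝ :=
  1 - PowerSeries.C (2 * x) * PowerSeries.X + PowerSeries.X ^ 2

/-- The higher-order Chebyshev polynomial of the first kind `T_n^{(α)}(x)`,
the `n`-th coefficient of `((1-t²)·D⁻¹)^α`. -/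
noncomputable def chebT (x : ℝ) (α n : ℕ) : ℝ :=
  PowerSeries.coeff n (((1 - PowerSeries.X ^ 2) * (Dser x)⁻¹) ^ α)

/-!
Write `g = D⁻¹`, `E = x - t` and `'` for `d/dt`. Since `g' = 2 E g²`, the operator `E·d/dt + 2N`
sends `E^{2N} g^{N+1}` to `2(N+1) E^{2N+2} g^{N+2}` and `E^i g^{(i)}` to
`(2N - i) E^i g^{(i)} + E^{i+1} g^{(i+1)}`; the recursion of `a` is exactly this, so
`∑ᵢ a(i,N) E^i g^{(i)} = 2^N N! E^{2N} g^{N+1}`. Dividing by `E^{2N}`, with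
`E^{i-2N} = ∑ₘ C(2N+m-i-1, m) x^{i-2N-m} tᵐ`, expresses `2^N N! g^{N+1}` through the `g^{(i)}`.
Now `2g = ((1-t)⁻¹ + (1+t)⁻¹)·(1-t²)g`, where `(1-t²)g = ∑ T_p tᵖ`, and the Leibniz rule for
`((1 ∓ t)⁻¹ (1-t²)g)^{(i)}` gives the sums over `l` and `s`. On the left,
`g^{N+1} = (1-t)^{-(N+1)} (1+t)^{-(N+1)} ((1-t²)g)^{N+1}`. Comparing coefficients of `tⁿ` gives
the identity.
-/

open PowerSeries Finset Nat

theorem Finset.sum_range_smul_add_sum_range_smul_succ {S M : Type*} [Semiring S] [AddCommMonoid M]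
    [Module S M] (n : ℕ) (α β γ : ℕ → S) (u : ℕ → M)
    (h0 : γ 0 = α 0) (hlast : γ (n + 1) = β n)
    (hsucc : ∀ l < n, γ (l + 1) = α (l + 1) + β l) :
    ∑ l ∈ range (n + 1), α l • u l + ∑ l ∈ range (n + 1), β l • u (l + 1)
      = ∑ l ∈ range (n + 2), γ l • u l := by
  have hmid : ∑ l ∈ range n, γ (l + 1) • u (l + 1)
      = ∑ l ∈ range n, α (l + 1) • u (l + 1) + ∑ l ∈ range n, β l • u (l + 1) := by
    rw [← sum_add_distrib]
    exact sum_congr rfl fun l hl => by rw [hsucc l (mem_range.mp hl), add_smul]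
  rw [sum_range_succ' (fun l => γ l • u l), sum_range_succ (fun l => γ (l + 1) • u (l + 1)),
    sum_range_succ' (fun l => α l • u l), sum_range_succ (fun l => β l • u (l + 1)), hmid, h0,
    hlast]
  abel

theorem Derivation.iterate_leibniz {R A : Type*} [CommSemiring R] [CommSemiring A] [Algebra R A]
    (D : Derivation R A A) (n : ℕ) (a b : A) :
    D^[n] (a * b) = ∑ k ∈ range (n + 1), n.choose k • (D^[n - k] a * D^[k] b) := by
  induction n with
  | zero => simp
  | succ n ih =>
    have hterm : ∀ k ∈ range (n + 1), D (n.choose k • (D^[n - k] a * D^[k] b))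
        = n.choose k • (D^[n + 1 - k] a * D^[k] b)
          + n.choose k • (D^[n + 1 - (k + 1)] a * D^[k + 1] b) := by
      intro k hk
      rw [map_nsmul, leibniz, smul_eq_mul, smul_eq_mul, ← smul_add, add_comm,
        Nat.sub_add_comm (by simpa [Nat.lt_succ_iff] using hk), Nat.add_sub_add_right,
        Function.iterate_succ_apply', Function.iterate_succ_apply', mul_comm (D^[k] b)]
    rw [Function.iterate_succ_apply', ih, map_sum, sum_congr rfl hterm, sum_add_distrib]
    exact sum_range_smul_add_sum_range_smul_succ n _ _ _
      (fun k => D^[n + 1 - k] a * D^[k] b) (by simp) (by simp)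
      fun l _ => by rw [Nat.choose_succ_succ', add_comm]

theorem Derivation.iterate_map_smul {R A : Type*} [CommSemiring R] [CommSemiring A] [Algebra R A]
    (D : Derivation R A A) (n : ℕ) (c : R) (a : A) : D^[n] (c • a) = c • D^[n] a :=
  Function.Commute.iterate_left (fun b => D.map_smul c b) n a

theorem coeff_mul_mul {R : Type*} [Semiring R] (f g h : R⟦X⟧) (n : ℕ) :
    coeff n (f * g * h)
      = ∑ m ∈ range (n + 1), ∑ s ∈ range (n + 1 - m),
          coeff m f * coeff s g * coeff (n - m - s) h := by
  rw [mul_assoc, coeff_mul, Nat.sum_antidiagonal_eq_sum_range_succ_mk]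
  refine sum_congr rfl fun m hm => ?_
  rw [coeff_mul, Nat.sum_antidiagonal_eq_sum_range_succ_mk, mul_sum]
  exact sum_congr (by have := mem_range.mp hm; congr 1; omega) fun s _ => (mul_assoc _ _ _).symm

section

variable {R : Type*} [CommRing R]

theorem coeff_rescale_invOneSubPow_succ (r : R) (k m : ℕ) :
    coeff m (rescale r (invOneSubPow R (k + 1) : R⟦X⟧)) = r ^ m * (k + m).choose k := by
  rw [coeff_rescale, invOneSubPow_val_succ_eq_mk_add_choose, coeff_mk]

theorem rescale_invOneSubPow_mul_pow (r : R) (d : ℕ) :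
    rescale r (invOneSubPow R d : R⟦X⟧) * (1 - C r * X) ^ d = 1 := by
  rw [← rescale_X, ← map_one (rescale r), ← map_sub, ← map_pow, ← map_mul,
    ← invOneSubPow_inv_eq_one_sub_pow, Units.inv_eq_val_inv, Units.mul_inv, map_one]

theorem iterate_derivative_rescale_invOneSubPow_one (r : R) (k : ℕ) :
    (d⁄dX R)^[k] (rescale r (invOneSubPow R 1 : R⟦X⟧))
      = C (k ! * r ^ k : R) * rescale r (invOneSubPow R (k + 1) : R⟦X⟧) := by
  ext m
  rw [coeff_iterate_derivative, coeff_C_mul, coeff_rescale_invOneSubPow_succ,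
    coeff_rescale_invOneSubPow_succ, Nat.ascFactorial_eq_factorial_mul_choose,
    Nat.choose_zero_right, add_comm m k]
  push_cast
  ring

theorem iterate_derivative_rescale_invOneSubPow_one_mul (r : R) (f : R⟦X⟧) (i : ℕ) :
    (d⁄dX R)^[i] (rescale r (invOneSubPow R 1 : R⟦X⟧) * f)
      = ∑ l ∈ range (i + 1), C (i.choose l * (i - l)! * r ^ (i - l) : R) *
          (rescale r (invOneSubPow R (i - l + 1) : R⟦X⟧) * (d⁄dX R)^[l] f) := by
  rw [Derivation.iterate_leibniz]
  refine sum_congr rfl fun l _ => ?_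
  rw [iterate_derivative_rescale_invOneSubPow_one, nsmul_eq_mul]
  simp only [map_mul, map_natCast]
  ring

theorem rescale_invOneSubPow_one_add_mul (f : R⟦X⟧) :
    (rescale 1 (invOneSubPow R 1 : R⟦X⟧) + rescale (-1) (invOneSubPow R 1 : R⟦X⟧))
        * ((1 - X ^ 2) * f) = (2 : R) • f := by
  have h1 := rescale_invOneSubPow_mul_pow (1 : R) 1
  have h2 := rescale_invOneSubPow_mul_pow (-1 : R) 1
  simp only [map_neg, map_one, one_mul, neg_mul, sub_neg_eq_add, pow_one] at h1 h2
  rw [smul_eq_C_mul, map_ofNat]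
  linear_combination ((1 + X) * f) * h1 + ((1 - X) * f) * h2

theorem sub_X_mul_derivative_pow_mul (x : R) (k : ℕ) (f : R⟦X⟧) :
    (C x - X) * d⁄dX R ((C x - X) ^ k * f) + k • ((C x - X) ^ k * f)
      = (C x - X) ^ (k + 1) * d⁄dX R f := by
  rw [Derivation.leibniz, Derivation.leibniz_pow, map_sub, derivative_C, derivative_X]
  cases k with
  | zero => simp [pow_succ]
  | succ k => simp only [smul_eq_mul, nsmul_eq_mul, Nat.add_sub_cancel]; ring

theorem sub_X_mul_derivative_add_smul_pow_mul_iterate (c x : R) (k : ℕ) (f : R⟦X⟧) :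
    (C x - X) * d⁄dX R ((C x - X) ^ k * (d⁄dX R)^[k] f) + c • ((C x - X) ^ k * (d⁄dX R)^[k] f)
      = (c - k) • ((C x - X) ^ k * (d⁄dX R)^[k] f)
        + (C x - X) ^ (k + 1) * (d⁄dX R)^[k + 1] f := by
  rw [Function.iterate_succ_apply', ← sub_X_mul_derivative_pow_mul, sub_smul,
    Nat.cast_smul_eq_nsmul]
  abel

end

section

variable {K : Type*} [Field K]

noncomputable def invSubXPow (x : K) (k : ℕ) : K⟦X⟧ :=
  C (x⁻¹ ^ k) * rescale x⁻¹ (invOneSubPow K k : K⟦X⟧)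

theorem invSubXPow_mul_pow {x : K} (hx : x ≠ 0) (k : ℕ) : invSubXPow x k * (C x - X) ^ k = 1 := by
  have hE : C x - X = C x * (1 - C x⁻¹ * X) := by
    rw [mul_sub, mul_one, ← mul_assoc, ← map_mul, mul_inv_cancel₀ hx, map_one, one_mul]
  rw [invSubXPow, hE, mul_pow, mul_mul_mul_comm, ← map_pow, ← map_mul, ← mul_pow,
    inv_mul_cancel₀ hx, one_pow, map_one, one_mul, rescale_invOneSubPow_mul_pow]

theorem coeff_invSubXPow_succ (x : K) (k m : ℕ) :
    coeff m (invSubXPow x (k + 1)) = x⁻¹ ^ (k + 1 + m) * (k + m).choose k := by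
  rw [invSubXPow, coeff_C_mul, coeff_rescale_invOneSubPow_succ, ← mul_assoc, ← pow_add]

end

theorem fallingFactorial_natCast_add (p l : ℕ) :
    fallingFactorial ((p : ℝ) + l) l = (p + 1).ascFactorial l := by
  rw [fallingFactorial, ← descPochhammer_eval_eq_prod_range, ← Nat.cast_add,
    descPochhammer_eval_eq_descFactorial, Nat.add_descFactorial_eq_ascFactorial]

theorem cast_choose_mul_factorial_sub {i l : ℕ} (h : l ≤ i) :
    (i.choose l * (i - l)! : ℝ) = i ! / l ! := by
  rw [eq_div_iff (by positivity), mul_right_comm]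
  exact_mod_cast Nat.choose_mul_factorial_mul_factorial h

theorem derivative_inv_Dser (x : ℝ) :
    d⁄dX ℝ (Dser x)⁻¹ = C 2 * (C x - X) * (Dser x)⁻¹ ^ 2 := by
  rw [derivative_inv', Dser, map_add, map_sub, derivative_one, Derivation.leibniz,
    Derivation.leibniz_pow, derivative_C, derivative_X, map_mul C, map_ofNat C 2]
  simp only [smul_eq_mul, nsmul_eq_mul]
  ring

theorem sub_X_mul_derivative_add_smul_inv_Dser_pow (x : ℝ) (N : ℕ) :
    (C x - X) * d⁄dX ℝ ((C x - X) ^ (2 * N) * (Dser x)⁻¹ ^ (N + 1))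
        + (2 * N : ℝ) • ((C x - X) ^ (2 * N) * (Dser x)⁻¹ ^ (N + 1))
      = (2 * (N + 1) : ℝ) • ((C x - X) ^ (2 * (N + 1)) * (Dser x)⁻¹ ^ (N + 1 + 1)) := by
  have h := sub_X_mul_derivative_pow_mul x (2 * N) ((Dser x)⁻¹ ^ (N + 1))
  rw [← Nat.cast_smul_eq_nsmul ℝ] at h
  push_cast at h
  rw [h, derivative_pow, derivative_inv_Dser, smul_eq_C_mul, Nat.add_sub_cancel]
  simp only [map_mul, map_add, map_natCast, map_one, map_ofNat]
  push_cast
  ring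

theorem sum_smul_sub_X_pow_mul_iterate_derivative_inv_Dser (a : ℕ → ℕ → ℝ)
    (ha11 : a 1 1 = 1)
    (ha1 : ∀ N : ℕ, 1 ≤ N → a 1 (N + 1) = (2 * (N : ℝ) - 1) * a 1 N)
    (hadiag : ∀ N : ℕ, 1 ≤ N → a (N + 1) (N + 1) = a N N)
    (harec : ∀ N i : ℕ, 2 ≤ i → i ≤ N →
      a i (N + 1) = a (i - 1) N + (2 * (N : ℝ) - (i : ℝ)) * a i N)
    (x : ℝ) {N : ℕ} (hN : 1 ≤ N) :
    ∑ j ∈ range N, a (j + 1) N • ((C x - X) ^ (j + 1) * (d⁄dX ℝ)^[j + 1] (Dser x)⁻¹)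
      = ((2 : ℝ) ^ N * N !) • ((C x - X) ^ (2 * N) * (Dser x)⁻¹ ^ (N + 1)) := by
  induction N, hN using Nat.le_induction with
  | base =>
    rw [range_one, sum_singleton, zero_add, ha11, one_smul, Function.iterate_one,
      derivative_inv_Dser, smul_eq_C_mul]
    simp only [pow_one, Nat.factorial_one, Nat.cast_one, mul_one, map_ofNat]
    ring
  | succ N hN ih =>
    obtain ⟨M, rfl⟩ := Nat.exists_eq_add_of_le' hN
    set T : ℕ → ℝ⟦X⟧ := fun j => (C x - X) ^ (j + 1) * (d⁄dX ℝ)^[j + 1] (Dser x)⁻¹ with hT_def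
    have hT (j : ℕ) : (C x - X) * d⁄dX ℝ (T j) + (2 * (M + 1) : ℝ) • T j
        = (2 * (M + 1) - (j + 1) : ℝ) • T j + T (j + 1) := by
      exact_mod_cast sub_X_mul_derivative_add_smul_pow_mul_iterate (2 * (M + 1) : ℝ) x (j + 1)
        (Dser x)⁻¹
    have hstep : (C x - X) * d⁄dX ℝ (∑ j ∈ range (M + 1), a (j + 1) (M + 1) • T j)
          + (2 * (M + 1) : ℝ) • ∑ j ∈ range (M + 1), a (j + 1) (M + 1) • T j
        = ∑ j ∈ range (M + 1), ((2 * (M + 1) - (j + 1) : ℝ) * a (j + 1) (M + 1)) • T j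
          + ∑ j ∈ range (M + 1), a (j + 1) (M + 1) • T (j + 1) := by
      rw [map_sum, mul_sum, smul_sum, ← sum_add_distrib, ← sum_add_distrib]
      refine sum_congr rfl fun j _ => ?_
      rw [Derivation.map_smul, mul_smul_comm, smul_comm, ← smul_add, hT, smul_add, smul_smul,
        mul_comm]
    rw [sum_range_smul_add_sum_range_smul_succ M _ _ (fun j => a (j + 1) (M + 2)) T
      ?_ ?_ ?_] at hstep
    · have hkey := sub_X_mul_derivative_add_smul_inv_Dser_pow x (M + 1)
      push_cast at hkey
      rw [← hstep, ih, Derivation.map_smul, mul_smul_comm, smul_comm, ← smul_add, hkey, smul_smul]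
      congr 1
      push_cast [Nat.factorial_succ]
      ring
    · rw [ha1 (M + 1) le_add_self]
      push_cast
      ring
    · exact hadiag (M + 1) le_add_self
    · intro l hl
      rw [harec (M + 1) (l + 2) le_add_self (by omega)]
      push_cast
      ring

theorem sum_smul_invSubXPow_mul_iterate_derivative_inv_Dser (a : ℕ → ℕ → ℝ)
    (ha11 : a 1 1 = 1)
    (ha1 : ∀ N : ℕ, 1 ≤ N → a 1 (N + 1) = (2 * (N : ℝ) - 1) * a 1 N)
    (hadiag : ∀ N : ℕ, 1 ≤ N → a (N + 1) (N + 1) = a N N)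
    (harec : ∀ N i : ℕ, 2 ≤ i → i ≤ N →
      a i (N + 1) = a (i - 1) N + (2 * (N : ℝ) - (i : ℝ)) * a i N)
    {x : ℝ} (hx : x ≠ 0) {N : ℕ} (hN : 1 ≤ N) :
    ∑ i ∈ Icc 1 N, (2 * a i N) • (invSubXPow x (2 * N - i) * (d⁄dX ℝ)^[i] (Dser x)⁻¹)
      = ((2 : ℝ) ^ (N + 1) * N !) • (Dser x)⁻¹ ^ (N + 1) := by
  have hunit : IsUnit ((C x - X) ^ (2 * N)) := by
    refine IsUnit.pow _ ?_
    rw [isUnit_iff_constantCoeff]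
    simpa using hx
  have hcancel : ∀ i ∈ Icc 1 N,
      (C x - X) ^ (2 * N) * ((2 * a i N) • (invSubXPow x (2 * N - i) * (d⁄dX ℝ)^[i] (Dser x)⁻¹))
        = (2 : ℝ) • (a i N • ((C x - X) ^ i * (d⁄dX ℝ)^[i] (Dser x)⁻¹)) := by
    intro i hi
    have hE := invSubXPow_mul_pow hx (2 * N - i)
    rw [← pow_mul_pow_sub (C x - X) (show i ≤ 2 * N by grind), mul_smul_comm, smul_smul]
    congr 1
    linear_combination ((C x - X) ^ i * (d⁄dX ℝ)^[i] (Dser x)⁻¹) * hE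
  apply hunit.mul_left_cancel
  have hrange : ∑ i ∈ Icc 1 N, a i N • ((C x - X) ^ i * (d⁄dX ℝ)^[i] (Dser x)⁻¹)
      = ∑ j ∈ range N, a (j + 1) N • ((C x - X) ^ (j + 1) * (d⁄dX ℝ)^[j + 1] (Dser x)⁻¹) := by
    rw [range_eq_Ico, sum_Ico_add' (fun i => a i N • ((C x - X) ^ i * (d⁄dX ℝ)^[i] (Dser x)⁻¹))]
    rfl
  rw [mul_sum, sum_congr rfl hcancel, ← smul_sum, hrange,
    sum_smul_sub_X_pow_mul_iterate_derivative_inv_Dser a ha11 ha1 hadiag harec x hN,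
    mul_smul_comm, smul_smul]
  congr 1
  ring

theorem coeff_inv_Dser_pow_eq_sum_chebT (x : ℝ) (N n : ℕ) :
    coeff n ((Dser x)⁻¹ ^ (N + 1))
      = ∑ s ∈ range (n + 1), ∑ m ∈ range (n + 1 - s),
          (Nat.choose (N + s) s : ℝ) * (Nat.choose (m + N) m : ℝ) * (-1 : ℝ) ^ m *
            chebT x (N + 1) (n - s - m) := by
  have hprod : rescale 1 (invOneSubPow ℝ (N + 1) : ℝ⟦X⟧) * rescale (-1) (invOneSubPow ℝ (N + 1))
      * ((1 - X ^ 2) * (Dser x)⁻¹) ^ (N + 1) = (Dser x)⁻¹ ^ (N + 1) := by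
    have h1 := rescale_invOneSubPow_mul_pow (1 : ℝ) (N + 1)
    have h2 := rescale_invOneSubPow_mul_pow (-1 : ℝ) (N + 1)
    simp only [map_neg, map_one, one_mul, neg_mul, sub_neg_eq_add] at h1 h2
    rw [show (1 - X ^ 2 : ℝ⟦X⟧) = (1 - X) * (1 + X) by ring, mul_pow, mul_pow]
    linear_combination
      (rescale (-1) (invOneSubPow ℝ (N + 1) : ℝ⟦X⟧) * (1 + X) ^ (N + 1) * (Dser x)⁻¹ ^ (N + 1)) * h1
        + (Dser x)⁻¹ ^ (N + 1) * h2
  rw [← hprod, coeff_mul_mul]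
  refine sum_congr rfl fun s _ => sum_congr rfl fun m _ => ?_
  rw [coeff_rescale_invOneSubPow_succ, coeff_rescale_invOneSubPow_succ, chebT, add_comm m N,
    Nat.choose_symm_add, Nat.choose_symm_add, one_pow, one_mul]
  ring

theorem sum_mul_sum_chebT_eq_coeff_iterate_derivative (c r x : ℝ) {N i : ℕ} (hi : i < 2 * N)
    (n : ℕ) :
    ∑ l ∈ range (i + 1), c * ((i ! : ℝ) / (l ! : ℝ)) * r ^ (i - l) *
        ∑ m ∈ range (n + 1), ∑ s ∈ range (n + 1 - m),
          r ^ s * (Nat.choose (2 * N + m - i - 1) m : ℝ) * (Nat.choose (i + s - l) s : ℝ) *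
            fallingFactorial (((n - m - s : ℕ) : ℝ) + (l : ℝ)) l *
            x ^ ((i : ℤ) - 2 * (N : ℤ) - (m : ℤ)) * chebT x 1 ((n - m - s) + l)
      = coeff n (c • (invSubXPow x (2 * N - i) *
          (d⁄dX ℝ)^[i] (rescale r (invOneSubPow ℝ 1 : ℝ⟦X⟧) * ((1 - X ^ 2) * (Dser x)⁻¹)))) := by
  rw [iterate_derivative_rescale_invOneSubPow_one_mul, mul_sum, smul_sum, map_sum]
  refine sum_congr rfl fun l hl => ?_
  have hli : l ≤ i := Nat.lt_succ_iff.mp (mem_range.mp hl)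
  rw [mul_left_comm, coeff_smul, coeff_C_mul, smul_eq_mul, ← mul_assoc (invSubXPow _ _),
    coeff_mul_mul, cast_choose_mul_factorial_sub hli, ← mul_assoc, ← mul_assoc]
  congr 1
  refine sum_congr rfl fun m _ => sum_congr rfl fun s _ => ?_
  have hP : 2 * N - i = (2 * N - i - 1) + 1 := by omega
  have hx : x ^ ((i : ℤ) - 2 * (N : ℤ) - (m : ℤ)) = x⁻¹ ^ (2 * N - i - 1 + 1 + m) := by
    rw [inv_pow, ← zpow_natCast, ← zpow_neg]
    congr 1
    omega
  rw [hP, coeff_invSubXPow_succ, coeff_rescale_invOneSubPow_succ, coeff_iterate_derivative,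
    fallingFactorial_natCast_add, hx, chebT, pow_one, Nat.choose_symm_add,
    show 2 * N + m - i - 1 = 2 * N - i - 1 + m by omega, show i + s - l = i - l + s by omega,
    Nat.choose_symm_add]
  ring

/-- for `N ≥ 1`, `n ≥ 0` and real `x ≠ 0`,
`2^{N+1} N! Σ_{s+m+p=n} C(N+s,s) C(m+N,m) (-1)^m T_p^{(N+1)}(x)
 = Σ_{i=1}^N Σ_{l=0}^i a(i,N) (i!/l!) Σ_{m+s+p=n} C(2N+m-i-1,m) C(i+s-l,s)
     (p+l)_l x^{i-2N-m} T_{p+l}(x)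
 + Σ_{i=1}^N Σ_{l=0}^i a(i,N) (i!/l!) (-1)^{i-l} Σ_{m+s+p=n} (-1)^s
     C(2N+m-i-1,m) C(i+s-l,s) (p+l)_l x^{i-2N-m} T_{p+l}(x)`,
where sums over triples of nonnegative integers summing to `n` are realized as
double sums with the third index determined, and `a` is the family defined by
the recursion `a(1,1) = 1`, `a(1,N+1) = (2N-1)a(1,N)`, `a(N+1,N+1) = a(N,N)`,
`a(i,N+1) = a(i-1,N) + (2N-i)a(i,N)` for `2 ≤ i ≤ N`. -/
theorem stmt10
    (a : ℕ → ℕ → ℝ)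
    (ha11 : a 1 1 = 1)
    (ha1 : ∀ N : ℕ, 1 ≤ N → a 1 (N + 1) = (2 * (N : ℝ) - 1) * a 1 N)
    (hadiag : ∀ N : ℕ, 1 ≤ N → a (N + 1) (N + 1) = a N N)
    (harec : ∀ N i : ℕ, 2 ≤ i → i ≤ N →
      a i (N + 1) = a (i - 1) N + (2 * (N : ℝ) - (i : ℝ)) * a i N)
    (x : ℝ) (hx : x ≠ 0) (N n : ℕ) (hN : 1 ≤ N) :
    2 ^ (N + 1) * (Nat.factorial N : ℝ) *
        ∑ s ∈ Finset.range (n + 1), ∑ m ∈ Finset.range (n + 1 - s),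
          (Nat.choose (N + s) s : ℝ) * (Nat.choose (m + N) m : ℝ) * (-1 : ℝ) ^ m *
            chebT x (N + 1) (n - s - m) =
      (∑ i ∈ Finset.Icc 1 N, ∑ l ∈ Finset.range (i + 1),
        a i N * ((Nat.factorial i : ℝ) / (Nat.factorial l : ℝ)) *
          ∑ m ∈ Finset.range (n + 1), ∑ s ∈ Finset.range (n + 1 - m),
            (Nat.choose (2 * N + m - i - 1) m : ℝ) * (Nat.choose (i + s - l) s : ℝ) *
              fallingFactorial (((n - m - s : ℕ) : ℝ) + (l : ℝ)) l *
              x ^ ((i : ℤ) - 2 * (N : ℤ) - (m : ℤ)) *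
              chebT x 1 ((n - m - s) + l)) +
      (∑ i ∈ Finset.Icc 1 N, ∑ l ∈ Finset.range (i + 1),
        a i N * ((Nat.factorial i : ℝ) / (Nat.factorial l : ℝ)) * (-1 : ℝ) ^ (i - l) *
          ∑ m ∈ Finset.range (n + 1), ∑ s ∈ Finset.range (n + 1 - m),
            (-1 : ℝ) ^ s *
              (Nat.choose (2 * N + m - i - 1) m : ℝ) * (Nat.choose (i + s - l) s : ℝ) *
              fallingFactorial (((n - m - s : ℕ) : ℝ) + (l : ℝ)) l *
              x ^ ((i : ℤ) - 2 * (N : ℤ) - (m : ℤ)) *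
              chebT x 1 ((n - m - s) + l)) := by
  rw [← coeff_inv_Dser_pow_eq_sum_chebT, ← smul_eq_mul, ← coeff_smul,
    ← sum_smul_invSubXPow_mul_iterate_derivative_inv_Dser a ha11 ha1 hadiag harec hx hN,
    map_sum, ← sum_add_distrib]
  refine sum_congr rfl fun i hi => ?_
  have hi2N : i < 2 * N := by grind
  have hplus := sum_mul_sum_chebT_eq_coeff_iterate_derivative (a i N) 1 x hi2N n
  simp only [one_pow, mul_one, one_mul] at hplus
  rw [hplus, sum_mul_sum_chebT_eq_coeff_iterate_derivative (a i N) (-1) x hi2N n, ← map_add,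
    ← smul_add, ← mul_add, ← iterate_map_add, ← add_mul, rescale_invOneSubPow_one_add_mul,
    Derivation.iterate_map_smul, mul_smul_comm, smul_smul, mul_comm]
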